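/- arXiv:2407.10682 — 11 statements merged into one kernel-verified Lean document; each statement's English description precedes it below -/
import Mathlib

section
/- Let m ≥ 2 be an integer, N = 2m+1, and let A be an honest matrix of order N. Then for each k with 1 ≤ k ≤ m-1 and each index i, setting β₁(k) = 2(m+1) - 2k - 3 and β₂(k) = 2(m+1) - k, the entry [A^{⊗(k+1)}]_{i,j} is different from ε if and only if j lies (modulo N) in the window β₁(k) + i ≤ j ≤ β₂(k) + i - 2; for all j outside this window [A^{⊗(k+1)}]_{i,j} = ε. -/
open Finset

/-- Max-plus matrix product over `ℝ_max = WithBot ℝ` (with `ε = ⊥`, `ε + x = ε`). -/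
noncomputable def mpMul {N : ℕ} [NeZero N]
    (A B : Matrix (ZMod N) (ZMod N) (WithBot ℝ)) :
    Matrix (ZMod N) (ZMod N) (WithBot ℝ) :=
  fun i j => Finset.univ.sup fun k => A i k + B k j

/-- Max-plus identity matrix. -/
noncomputable def mpId {N : ℕ} : Matrix (ZMod N) (ZMod N) (WithBot ℝ) :=
  fun i j => if i = j then (0 : WithBot ℝ) else ⊥

/-- Max-plus matrix power: `mpPow A k = A^{⊗k}` (with `A^{⊗0}` the max-plus identity). -/
noncomputable def mpPow {N : ℕ} [NeZero N]
    (A : Matrix (ZMod N) (ZMod N) (WithBot ℝ)) : ℕ → Matrix (ZMod N) (ZMod N) (WithBot ℝ)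
  | 0 => mpId
  | k + 1 => mpMul (mpPow A k) A

/-- `A` is an honest matrix (with `r = 2`): `[A]_{i,j} ≠ ε` exactly when `i ≡ j+1` or
`i ≡ j+2 (mod N)`; moreover `[A]_{j+1,j} > 0` and `[A]_{j+2,j} < 0` for all `j`. -/
def Honest {N : ℕ} (A : Matrix (ZMod N) (ZMod N) (WithBot ℝ)) : Prop :=
  (∀ i j : ZMod N, A i j ≠ ⊥ ↔ (i = j + 1 ∨ i = j + 2)) ∧
  (∀ j : ZMod N, 0 < A (j + 1) j) ∧
  (∀ j : ZMod N, A (j + 2) j < 0)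

lemma mpPow_ne_bot {N : ℕ} [NeZero N] (A : Matrix (ZMod N) (ZMod N) (WithBot ℝ))
    (hA : ∀ i j : ZMod N, A i j ≠ ⊥ ↔ (i = j + 1 ∨ i = j + 2)) :
    ∀ n (i j : ZMod N), mpPow A n i j ≠ ⊥ ↔
      ∃ s : ℕ, n ≤ s ∧ s ≤ 2 * n ∧ j = i - (s : ZMod N) := by
  intro n
  induction n with
  | zero =>
    intro i j
    simp only [mpPow, mpId]
    constructor
    · intro h
      refine ⟨0, le_rfl, by norm_num, ?_⟩
      by_contra hij
      have : ¬ i = j := by intro hh; apply hij; simp [hh]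
      simp [this] at h
    · rintro ⟨s, hs0, hs1, rfl⟩
      interval_cases s
      simp
  | succ n ih =>
    intro i j
    have hsup : (mpPow A (n + 1) i j = ⊥) ↔ ∀ l : ZMod N, mpPow A n i l + A l j = ⊥ := by
      show (Finset.univ.sup fun l => mpPow A n i l + A l j) = ⊥ ↔ _
      rw [Finset.sup_eq_bot_iff]
      simp
    constructor
    · intro h
      rw [Ne, hsup] at h
      push_neg at h
      obtain ⟨l, hl⟩ := h
      rw [Ne, WithBot.add_eq_bot] at hl
      push_neg at hl
      obtain ⟨h1, h2⟩ := hl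
      obtain ⟨s, hs0, hs1, hls⟩ := (ih i l).1 h1
      rcases (hA l j).1 h2 with hc | hc
      · refine ⟨s + 1, by omega, by omega, ?_⟩
        have : j = l - 1 := by rw [hc]; ring
        rw [this, hls]; push_cast; ring
      · refine ⟨s + 2, by omega, by omega, ?_⟩
        have : j = l - 2 := by rw [hc]; ring
        rw [this, hls]; push_cast; ring
    · rintro ⟨s, hs0, hs1, rfl⟩
      rw [Ne, hsup]
      push_neg
      by_cases hc : s ≤ 2 * n + 1
      · -- use last step of size 1
        refine ⟨i - (s - 1 : ℕ), ?_⟩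
        rw [Ne, WithBot.add_eq_bot]
        push_neg
        constructor
        · exact (ih i _).2 ⟨s - 1, by omega, by omega, rfl⟩
        · rw [hA]
          left
          have : ((s : ℕ) : ZMod N) = ((s - 1 : ℕ) : ZMod N) + 1 := by
            have : s - 1 + 1 = s := by omega
            rw [← this]; push_cast; ring
          rw [this]; ring
      · -- use last step of size 2
        refine ⟨i - (s - 2 : ℕ), ?_⟩
        rw [Ne, WithBot.add_eq_bot]
        push_neg
        constructor
        · exact (ih i _).2 ⟨s - 2, by omega, by omega, rfl⟩
        · rw [hA]
          right
          have : ((s : ℕ) : ZMod N) = ((s - 2 : ℕ) : ZMod N) + 2 := by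
            have : s - 2 + 2 = s := by omega
            rw [← this]; push_cast; ring
          rw [this]; ring

/-- For `1 ≤ k ≤ m-1`, the entry `[A^{⊗(k+1)}]_{i,j}` is `≠ ε` iff `j` lies
(mod `N`) in the window `β₁(k)+i ≤ j ≤ β₂(k)+i-2`, where `β₁(k) = 2(m+1)-2k-3` and
`β₂(k) = 2(m+1)-k` (the window consists of the `k+2` residues `β₁(k)+i, …, β₂(k)+i-2`). -/
theorem stmt0 (m : ℕ) (hm : 2 ≤ m)
    (A : Matrix (ZMod (2 * m + 1)) (ZMod (2 * m + 1)) (WithBot ℝ)) (hA : Honest A)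
    (k : ℕ) (hk1 : 1 ≤ k) (hk2 : k ≤ m - 1) (i j : ZMod (2 * m + 1)) :
    mpPow A (k + 1) i j ≠ ⊥ ↔
      ∃ t : ℕ, t ≤ k + 1 ∧
        j = i + ((2 * (m + 1) - 2 * k - 3 : ℕ) : ZMod (2 * m + 1)) + (t : ZMod (2 * m + 1)) := by
  
  have hb : (2 * (m + 1) - 2 * k - 3) + (2 * k + 2) = 2 * m + 1 := by omega
  have h1 : ((2 * (m + 1) - 2 * k - 3 : ℕ) : ZMod (2 * m + 1))
      + ((2 * k + 2 : ℕ) : ZMod (2 * m + 1)) = 0 := by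
    rw [← Nat.cast_add, hb, ZMod.natCast_self]
  have hbz := eq_neg_of_add_eq_zero_left h1
  rw [mpPow_ne_bot A hA.1]
  constructor
  · rintro ⟨s, hs0, hs1, rfl⟩
    refine ⟨2 * k + 2 - s, by omega, ?_⟩
    rw [hbz, Nat.cast_sub (by omega : s ≤ 2 * k + 2)]
    push_cast
    ring
  · rintro ⟨t, ht, rfl⟩
    refine ⟨2 * k + 2 - t, by omega, by omega, ?_⟩
    rw [hbz, Nat.cast_sub (by omega : t ≤ 2 * k + 2)]
    push_cast
    ring
end

section
/- Let m ≥ 2 be an integer, N = 2m+1, and let A be an honest matrix of order N. Then every diagonal entry of the (2m+1)-st max-plus power of A equals L, i.e. [A^{⊗(2m+1)}]_{i,i} = [A]_{1,2m+1} + Σ_{p=1}^{2m} [A]_{p+1,p} for every index i. -/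
open Finset

/-- Two distinct naturals with difference smaller than `N` have distinct casts in `ZMod N`. -/
lemma aux_castne {N : ℕ} [NeZero N] {x y : ℕ} (hxy : x < y) (hlt : y - x < N) :
    (x : ZMod N) ≠ (y : ZMod N) := by
  intro h
  have h1 : x ≡ y [MOD N] := (ZMod.natCast_eq_natCast_iff _ _ _).mp h
  have h2 : N ∣ y - x := (Nat.modEq_iff_dvd' hxy.le).mp h1
  have h3 : N ≤ y - x := Nat.le_of_dvd (by omega) h2
  omega

lemma aux_sup_two {N : ℕ} [NeZero N] (f : ZMod N → WithBot ℝ) (j : ZMod N)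
    (h : ∀ l, l ≠ j + 1 → l ≠ j + 2 → f l = ⊥) :
    Finset.univ.sup f = f (j + 1) ⊔ f (j + 2) := by
  apply le_antisymm
  · refine Finset.sup_le fun l _ => ?_
    by_cases h1 : l = j + 1
    · subst h1; exact le_sup_left
    by_cases h2 : l = j + 2
    · subst h2; exact le_sup_right
    · rw [h l h1 h2]; exact bot_le
  · exact sup_le (Finset.le_sup (Finset.mem_univ _)) (Finset.le_sup (Finset.mem_univ _))

lemma aux_nonbot {N : ℕ} [NeZero N] {A : Matrix (ZMod N) (ZMod N) (WithBot ℝ)}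
    (hb : ∀ i j : ZMod N, A i j ≠ ⊥ ↔ (i = j + 1 ∨ i = j + 2)) :
    ∀ (k : ℕ) (i j : ZMod N), mpPow A k i j ≠ ⊥ →
      ∃ b ≤ k, i = j + ((k + b : ℕ) : ZMod N) := by
  intro k
  induction k with
  | zero =>
    intro i j h
    refine ⟨0, le_refl 0, ?_⟩
    simp only [mpPow, mpId] at h
    by_cases hij : i = j
    · simp [hij]
    · simp [hij] at h
  | succ k ih =>
    intro i j h
    simp only [mpPow, mpMul] at h
    rw [Ne, Finset.sup_eq_bot_iff] at h
    push_neg at h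
    obtain ⟨l, -, hl⟩ := h
    have hAl : A l j ≠ ⊥ := by intro hc; rw [hc, WithBot.add_bot] at hl; exact hl rfl
    have hP : mpPow A k i l ≠ ⊥ := by intro hc; rw [hc, WithBot.bot_add] at hl; exact hl rfl
    obtain ⟨b, hbk, hib⟩ := ih i l hP
    rcases (hb l j).mp hAl with h1 | h2
    · refine ⟨b, by omega, ?_⟩
      rw [hib, h1]
      push_cast
      ring
    · refine ⟨b + 1, by omega, ?_⟩
      rw [hib, h2]
      push_cast
      ring

lemma aux_L1 {N : ℕ} [NeZero N] {A : Matrix (ZMod N) (ZMod N) (WithBot ℝ)}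
    (hb : ∀ i j : ZMod N, A i j ≠ ⊥ ↔ (i = j + 1 ∨ i = j + 2)) :
    ∀ k : ℕ, k + 1 ≤ N → ∀ j : ZMod N,
      mpPow A k (j + (k : ℕ)) j
        = ∑ t ∈ Finset.range k, A (j + (t : ℕ) + 1) (j + (t : ℕ)) := by
  intro k
  induction k with
  | zero => intro _ j; simp [mpPow, mpId]
  | succ k ih =>
    intro hk j
    have hbot : mpPow A k (j + ((k + 1 : ℕ) : ZMod N)) (j + 2) = ⊥ := by
      by_contra hc
      obtain ⟨b, hbk, heq⟩ := aux_nonbot hb k _ _ hc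
      have hcast : ((k + 1 : ℕ) : ZMod N) = ((k + b + 2 : ℕ) : ZMod N) := by
        push_cast at heq ⊢
        linear_combination heq
      exact aux_castne (by omega) (by omega) hcast
    have hidx : j + ((k + 1 : ℕ) : ZMod N) = (j + 1) + ((k : ℕ) : ZMod N) := by
      push_cast; ring
    show Finset.univ.sup (fun l => mpPow A k (j + ((k + 1 : ℕ) : ZMod N)) l + A l j) = _
    rw [aux_sup_two _ j (fun l h1 h2 => by
      have hAl : A l j = ⊥ := by
        by_contra hc
        rcases (hb l j).mp hc with h | h
        exacts [h1 h, h2 h]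
      simp [hAl])]
    rw [hbot, WithBot.bot_add, sup_bot_eq, hidx, ih (by omega) (j + 1),
      Finset.sum_range_succ']
    congr 1
    · refine Finset.sum_congr rfl fun t _ => ?_
      have e : (j : ZMod N) + ((t + 1 : ℕ) : ZMod N) = (j + 1) + ((t : ℕ) : ZMod N) := by
        push_cast; ring
      rw [e]
    · simp

lemma aux_L2 {N : ℕ} [NeZero N] {A : Matrix (ZMod N) (ZMod N) (WithBot ℝ)}
    (hb : ∀ i j : ZMod N, A i j ≠ ⊥ ↔ (i = j + 1 ∨ i = j + 2)) :
    ∀ k : ℕ, k + 1 ≤ N → ∀ j : ZMod N,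
      mpPow A k (j + ((2 * k : ℕ) : ZMod N)) j
        = ∑ t ∈ Finset.range k, A (j + ((2 * t : ℕ) : ZMod N) + 2) (j + ((2 * t : ℕ) : ZMod N)) := by
  intro k
  induction k with
  | zero => intro _ j; simp [mpPow, mpId]
  | succ k ih =>
    intro hk j
    have hbot : mpPow A k (j + ((2 * (k + 1) : ℕ) : ZMod N)) (j + 1) = ⊥ := by
      by_contra hc
      obtain ⟨b, hbk, heq⟩ := aux_nonbot hb k _ _ hc
      have hcast : ((k + b + 1 : ℕ) : ZMod N) = ((2 * (k + 1) : ℕ) : ZMod N) := by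
        push_cast at heq ⊢
        linear_combination - heq
      exact aux_castne (by omega) (by omega) hcast
    have hidx : j + ((2 * (k + 1) : ℕ) : ZMod N) = (j + 2) + ((2 * k : ℕ) : ZMod N) := by
      push_cast; ring
    show Finset.univ.sup (fun l => mpPow A k (j + ((2 * (k + 1) : ℕ) : ZMod N)) l + A l j) = _
    rw [aux_sup_two _ j (fun l h1 h2 => by
      have hAl : A l j = ⊥ := by
        by_contra hc
        rcases (hb l j).mp hc with h | h
        exacts [h1 h, h2 h]
      simp [hAl])]
    rw [hbot, WithBot.bot_add, bot_sup_eq, hidx, ih (by omega) (j + 2),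
      Finset.sum_range_succ']
    congr 1
    · refine Finset.sum_congr rfl fun t _ => ?_
      have e : (j : ZMod N) + ((2 * (t + 1) : ℕ) : ZMod N)
          = (j + 2) + ((2 * t : ℕ) : ZMod N) := by
        push_cast; ring
      rw [e]
    · simp

lemma aux_sum_zmod {N : ℕ} [NeZero N] {M : Type*} [AddCommMonoid M] (h : ZMod N → M) :
    ∑ x : ZMod N, h x = ∑ t ∈ Finset.range N, h ↑t := by
  refine Finset.sum_nbij' (fun x => x.val) (fun t => (t : ZMod N)) ?_ ?_ ?_ ?_ ?_
  · intro a _; exact Finset.mem_range.mpr (ZMod.val_lt a)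
  · intro a _; exact Finset.mem_univ _
  · intro a _; exact ZMod.natCast_rightInverse a
  · intro a ha; exact ZMod.val_natCast_of_lt (Finset.mem_range.mp ha)
  · intro a _
    rw [ZMod.natCast_rightInverse a]

/-- Every diagonal entry of the `(2m+1)`-st max-plus power of `A` equals
`L = [A]_{1,2m+1} + Σ_{p=1}^{2m} [A]_{p+1,p}`. -/
theorem stmt2 (m : ℕ) (hm : 2 ≤ m)
    (A : Matrix (ZMod (2 * m + 1)) (ZMod (2 * m + 1)) (WithBot ℝ)) (hA : Honest A)
    (i : ZMod (2 * m + 1)) :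
    mpPow A (2 * m + 1) i i =
      A 1 ((2 * m + 1 : ℕ) : ZMod (2 * m + 1)) +
        ∑ p ∈ Finset.Icc 1 (2 * m), A ((p : ZMod (2 * m + 1)) + 1) (p : ZMod (2 * m + 1)) := by
  obtain ⟨hb, hpos, hneg⟩ := hA
  have hNcast : ((2 * m + 1 : ℕ) : ZMod (2 * m + 1)) = 0 := ZMod.natCast_self _
  -- the two relevant entries of `mpPow A (2*m)`
  have hi1 : (i + 1) + ((2 * m : ℕ) : ZMod (2 * m + 1)) = i := by
    push_cast at hNcast ⊢
    linear_combination hNcast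
  have h1 := aux_L1 hb (2 * m) (by omega) (i + 1)
  rw [hi1] at h1
  have hi2 : (i + 2) + ((2 * (2 * m) : ℕ) : ZMod (2 * m + 1)) = i := by
    push_cast at hNcast ⊢
    linear_combination 2 * hNcast
  have h2 := aux_L2 hb (2 * m) (by omega) (i + 2)
  rw [hi2] at h2
  -- sign facts
  have hle : mpPow A (2 * m) i (i + 2) + A (i + 2) i ≤ 0 := by
    rw [h2]
    exact add_nonpos (Finset.sum_nonpos fun t _ => le_of_lt (hneg _)) (le_of_lt (hneg i))
  have hge : (0 : WithBot ℝ) ≤ mpPow A (2 * m) i (i + 1) + A (i + 1) i := by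
    rw [h1]
    exact add_nonneg (Finset.sum_nonneg fun t _ => le_of_lt (hpos _)) (le_of_lt (hpos i))
  -- unfold the top power and compute the sup
  show Finset.univ.sup (fun l => mpPow A (2 * m) i l + A l i) = _
  rw [aux_sup_two _ i (fun l hx1 hx2 => by
    have hAl : A l i = ⊥ := by
      by_contra hc
      rcases (hb l i).mp hc with h | h
      exacts [hx1 h, hx2 h]
    simp [hAl])]
  rw [sup_eq_left.mpr (le_trans hle hge), h1]
  -- now identify the cyclic sum with the stated right-hand side
  have lhs_eq : (∑ t ∈ Finset.range (2 * m),
        A ((i + 1) + (t : ℕ) + 1) ((i + 1) + (t : ℕ))) + A (i + 1) i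
      = ∑ t ∈ Finset.range (2 * m + 1),
          A ((i + (t : ℕ)) + 1) (i + (t : ℕ)) := by
    rw [Finset.sum_range_succ']
    congr 1
    · refine Finset.sum_congr rfl fun t _ => ?_
      have e : (i + 1) + ((t : ℕ) : ZMod (2 * m + 1)) = i + ((t + 1 : ℕ) : ZMod (2 * m + 1)) := by
        push_cast; ring
      rw [e]
    · simp
  have shift : ∑ t ∈ Finset.range (2 * m + 1), A ((i + (t : ℕ)) + 1) (i + (t : ℕ))
      = ∑ t ∈ Finset.range (2 * m + 1), A (((t : ℕ) : ZMod (2 * m + 1)) + 1) ((t : ℕ)) := by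
    rw [← aux_sum_zmod (fun x : ZMod (2 * m + 1) => A ((i + x) + 1) (i + x)),
      ← aux_sum_zmod (fun x : ZMod (2 * m + 1) => A (x + 1) x)]
    exact Equiv.sum_comp (Equiv.addLeft i) (fun x : ZMod (2 * m + 1) => A (x + 1) x)
  have rhs_eq : ∑ t ∈ Finset.range (2 * m + 1), A (((t : ℕ) : ZMod (2 * m + 1)) + 1) ((t : ℕ))
      = A 1 ((2 * m + 1 : ℕ) : ZMod (2 * m + 1)) +
        ∑ p ∈ Finset.Icc 1 (2 * m), A ((p : ZMod (2 * m + 1)) + 1) (p : ZMod (2 * m + 1)) := by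
    rw [Finset.sum_range_succ', add_comm]
    congr 1
    · rw [hNcast]; simp
    · rw [← Finset.Ico_add_one_right_eq_Icc, Finset.sum_Ico_eq_sum_range]
      refine Finset.sum_congr (by norm_num) fun t _ => ?_
      have e : ((t + 1 : ℕ) : ZMod (2 * m + 1)) = ((1 + t : ℕ) : ZMod (2 * m + 1)) := by
        push_cast; ring
      rw [e]
  rw [lhs_eq, shift, rhs_eq]
end

section
/- Let m ≥ 2 be an integer, N = 2m+1, and let A be an honest matrix of order N satisfying the apex property: [A^{⊗(2m+1)}]_{i,j} ≤ L for all indices i, j. Then for every integer α ≥ 1 and every index i, [A^{⊗(α(2m+1))}]_{i,i} = α · L (the α-fold ordinary sum of the real number L). -/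
open Finset

/- ### Auxiliary lemmas -/

lemma mySupAddRight {ι : Type*} (s : Finset ι) (f : ι → WithBot ℝ) (c : WithBot ℝ) :
    s.sup f + c = s.sup fun k => f k + c := by
  induction s using Finset.cons_induction with
  | empty => simp
  | cons a s h ih => rw [Finset.sup_cons, Finset.sup_cons, ← ih, ← max_add_add_right]

lemma mySupAddLeft {ι : Type*} (s : Finset ι) (f : ι → WithBot ℝ) (c : WithBot ℝ) :
    c + s.sup f = s.sup fun k => c + f k := by
  induction s using Finset.cons_induction with
  | empty => simp
  | cons a s h ih => rw [Finset.sup_cons, Finset.sup_cons, ← ih, ← max_add_add_left]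

lemma myMulAssoc {N : ℕ} [NeZero N] (X Y Z : Matrix (ZMod N) (ZMod N) (WithBot ℝ)) :
    mpMul (mpMul X Y) Z = mpMul X (mpMul Y Z) := by
  funext i j
  simp only [mpMul]
  calc (Finset.univ.sup fun k => (Finset.univ.sup fun l => X i l + Y l k) + Z k j)
      = Finset.univ.sup fun k => Finset.univ.sup fun l => X i l + (Y l k + Z k j) := by
        refine Finset.sup_congr rfl fun k _ => ?_
        rw [mySupAddRight]
        exact Finset.sup_congr rfl fun l _ => add_assoc _ _ _
    _ = Finset.univ.sup fun l => Finset.univ.sup fun k => X i l + (Y l k + Z k j) :=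
        Finset.sup_comm _ _ _
    _ = Finset.univ.sup fun l => X i l + Finset.univ.sup fun k => Y l k + Z k j := by
        refine Finset.sup_congr rfl fun l _ => ?_
        rw [mySupAddLeft]

lemma myMulId {N : ℕ} [NeZero N] (X : Matrix (ZMod N) (ZMod N) (WithBot ℝ)) :
    mpMul X mpId = X := by
  funext i j
  simp only [mpMul, mpId]
  apply le_antisymm
  · refine Finset.sup_le fun k _ => ?_
    by_cases h : k = j
    · simp [h]
    · simp [h]
  · have := Finset.le_sup (f := fun k => X i k + if k = j then (0 : WithBot ℝ) else ⊥)
      (Finset.mem_univ j)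
    simpa using this

lemma myPowAdd {N : ℕ} [NeZero N] (A : Matrix (ZMod N) (ZMod N) (WithBot ℝ)) (a b : ℕ) :
    mpPow A (a + b) = mpMul (mpPow A a) (mpPow A b) := by
  induction b with
  | zero => simp [mpPow, myMulId]
  | succ b ih =>
      show mpPow A ((a + b) + 1) = _
      rw [mpPow, ih, show mpPow A (b+1) = mpMul (mpPow A b) A from rfl, myMulAssoc]

lemma mySumShift {N : ℕ} [NeZero N] (g : ZMod N → WithBot ℝ) (i : ZMod N) :
    ∑ t ∈ Finset.range N, g (i + (t : ZMod N)) = ∑ j : ZMod N, g j := by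
  refine Finset.sum_nbij' (fun t => i + (t : ZMod N)) (fun j => (j - i).val)
    (fun a _ => Finset.mem_univ _) (fun a _ => Finset.mem_range.2 (ZMod.val_lt _))
    (fun a ha => ?_) (fun a _ => ?_) (fun a _ => rfl)
  · show (i + (a : ZMod N) - i).val = a
    have h1 : i + (a : ZMod N) - i = (a : ZMod N) := by ring
    rw [h1, ZMod.val_cast_of_lt (Finset.mem_range.1 ha)]
  · show i + (((a - i).val : ℕ) : ZMod N) = a
    rw [ZMod.natCast_rightInverse (a - i)]
    ring

lemma myPathLower {N : ℕ} [NeZero N] (A : Matrix (ZMod N) (ZMod N) (WithBot ℝ)) (n : ℕ) :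
    ∀ i : ZMod N,
      (∑ t ∈ Finset.range n, A (i + (t : ZMod N) + 1) (i + (t : ZMod N)))
        ≤ mpPow A n (i + (n : ZMod N)) i := by
  induction n with
  | zero => intro i; simp [mpPow, mpId]
  | succ n ih =>
      intro i
      have hidx : i + ((n + 1 : ℕ) : ZMod N) = (i + 1) + (n : ZMod N) := by
        push_cast; ring
      have hsum : (∑ t ∈ Finset.range (n + 1), A (i + (t : ZMod N) + 1) (i + (t : ZMod N)))
          = (∑ t ∈ Finset.range n,
              A ((i + 1) + (t : ZMod N) + 1) ((i + 1) + (t : ZMod N))) + A (i + 1) i := by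
        rw [Finset.sum_range_succ']
        congr 1
        · refine Finset.sum_congr rfl fun t _ => ?_
          push_cast
          ring_nf
        · norm_num
      rw [hsum, hidx]
      show _ ≤ mpMul (mpPow A n) A ((i + 1) + (n : ZMod N)) i
      calc (∑ t ∈ Finset.range n,
              A ((i + 1) + (t : ZMod N) + 1) ((i + 1) + (t : ZMod N))) + A (i + 1) i
          ≤ mpPow A n ((i + 1) + (n : ZMod N)) (i + 1) + A (i + 1) i :=
            add_le_add (ih (i + 1)) le_rfl
        _ ≤ _ := Finset.le_sup (f := fun k => mpPow A n ((i + 1) + (n : ZMod N)) k + A k i)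
            (Finset.mem_univ (i + 1))

/-- If `A` satisfies the apex property `[A^{⊗(2m+1)}]_{i,j} ≤ L` for all `i, j`,
then for every `α ≥ 1` and every index `i`, `[A^{⊗(α(2m+1))}]_{i,i} = α • L`. -/
theorem stmt3 (m : ℕ) (hm : 2 ≤ m)
    (A : Matrix (ZMod (2 * m + 1)) (ZMod (2 * m + 1)) (WithBot ℝ)) (hA : Honest A)
    (L : WithBot ℝ)
    (hL : L = A 1 ((2 * m + 1 : ℕ) : ZMod (2 * m + 1)) +
        ∑ p ∈ Finset.Icc 1 (2 * m), A ((p : ZMod (2 * m + 1)) + 1) (p : ZMod (2 * m + 1)))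
    (hapex : ∀ i j : ZMod (2 * m + 1), mpPow A (2 * m + 1) i j ≤ L)
    (α : ℕ) (hα : 1 ≤ α) (i : ZMod (2 * m + 1)) :
    mpPow A (α * (2 * m + 1)) i i = α • L := by
  have hLsum : L = ∑ j : ZMod (2 * m + 1), A (j + 1) j := by
    rw [hL, ← mySumShift (N := 2 * m + 1) (fun j => A (j + 1) j) 0]
    simp only [zero_add]
    rw [Finset.sum_range_succ']
    simp only [Nat.cast_zero, zero_add, ZMod.natCast_self]
    rw [add_comm]
    congr 1
    rw [← Finset.Ico_add_one_right_eq_Icc, Finset.sum_Ico_eq_sum_range]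
    refine Finset.sum_congr (by norm_num) fun t _ => ?_
    rw [Nat.add_comm 1 t]
  have hdiag : ∀ i : ZMod (2 * m + 1), L ≤ mpPow A (2 * m + 1) i i := by
    intro i
    have h := myPathLower A (2 * m + 1) i
    rw [show ((2 * m + 1 : ℕ) : ZMod (2 * m + 1)) = 0 from ZMod.natCast_self _,
      add_zero] at h
    refine le_trans (le_of_eq ?_) h
    rw [hLsum, ← mySumShift (fun j => A (j + 1) j) i]
  have hub : ∀ a : ℕ, ∀ i j : ZMod (2 * m + 1),
      mpPow A (a * (2 * m + 1)) i j ≤ a • L := by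
    intro a
    induction a with
    | zero =>
        intro i j
        simp only [Nat.zero_mul, zero_smul]
        show mpId i j ≤ 0
        by_cases h : i = j <;> simp [mpId, h]
    | succ a ih =>
        intro i j
        rw [show (a + 1) * (2 * m + 1) = a * (2 * m + 1) + (2 * m + 1) by ring,
          myPowAdd, succ_nsmul]
        refine Finset.sup_le fun k _ => add_le_add (ih i k) (hapex k j)
  have hlb : ∀ a : ℕ, ∀ i : ZMod (2 * m + 1),
      a • L ≤ mpPow A (a * (2 * m + 1)) i i := by
    intro a
    induction a with
    | zero =>
        intro i
        simp only [Nat.zero_mul, zero_smul]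
        show (0 : WithBot ℝ) ≤ mpId i i
        simp [mpId]
    | succ a ih =>
        intro i
        rw [show (a + 1) * (2 * m + 1) = a * (2 * m + 1) + (2 * m + 1) by ring,
          myPowAdd, succ_nsmul]
        calc a • L + L ≤ mpPow A (a * (2 * m + 1)) i i + mpPow A (2 * m + 1) i i :=
              add_le_add (ih i) (hdiag i)
          _ ≤ _ := Finset.le_sup
              (f := fun k => mpPow A (a * (2 * m + 1)) i k + mpPow A (2 * m + 1) k i)
              (Finset.mem_univ i)
  exact le_antisymm (hub α i i) (hlb α i)
end

section
/- Let m ≥ 2 be an integer, N = 2m+1, and let A be an honest matrix of order N satisfying the apex property [A^{⊗(2m+1)}]_{i,j} ≤ L for all i, j. Then [A^{⊗(2m+1)} ⊗ A^{⊗(2m+1)}]_{i,i} = 2·L for every index i. -/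
open Finset

/-
The path `j → j + 1 → ⋯ → j + N = j` around the cycle of subdiagonal entries shows that every
diagonal entry of `A^{⊗N}` is at least `L`, the weight of that cycle; with the apex property this
makes `L` the diagonal value of `A^{⊗N}` and also the largest entry. Hence the diagonal of
`A^{⊗N} ⊗ A^{⊗N}` is attained at `k = i` and equals `L + L`.
-/

variable {N : ℕ} [NeZero N]

lemma sum_range_le_mpPow_apply (A : Matrix (ZMod N) (ZMod N) (WithBot ℝ)) (n : ℕ) (j : ZMod N) :
    ∑ t ∈ range n, A (j + t + 1) (j + t) ≤ mpPow A n (j + n) j := by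
  induction n generalizing j with
  | zero => simp [mpPow, mpId]
  | succ n ih =>
    have hshift : ∀ t : ℕ, j + ((t + 1 : ℕ) : ZMod N) = j + 1 + t := fun t => by
      push_cast; ring
    calc ∑ t ∈ range (n + 1), A (j + t + 1) (j + t)
        = (∑ t ∈ range n, A (j + 1 + t + 1) (j + 1 + t)) + A (j + 1) j := by
          rw [sum_range_succ']
          simp only [hshift, Nat.cast_zero, add_zero]
      _ ≤ mpPow A n (j + 1 + n) (j + 1) + A (j + 1) j := by gcongr; exact ih (j + 1)
      _ ≤ mpPow A (n + 1) (j + (n + 1 : ℕ)) j := by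
          rw [hshift]
          exact le_sup (f := fun k => mpPow A n (j + 1 + n) k + A k j) (mem_univ _)

lemma sum_range_natCast_add {M : Type*} [AddCommMonoid M] (g : ZMod N → M) (i : ZMod N) :
    ∑ t ∈ range N, g (i + t) = ∑ z, g z := by
  refine sum_nbij' (fun t => i + (t : ZMod N)) (fun z => (z - i).val)
    (fun _ _ => mem_univ _) (fun z _ => mem_range.2 (ZMod.val_lt _)) (fun t ht => ?_)
    (fun z _ => ?_) (fun _ _ => rfl)
  · rw [add_sub_cancel_left, ZMod.val_cast_of_lt (mem_range.1 ht)]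
  · rw [ZMod.natCast_zmod_val, add_sub_cancel]

lemma sum_univ_zmod_succ {M : Type*} [AddCommMonoid M] (n : ℕ) (g : ZMod (n + 1) → M) :
    ∑ z, g z = g ((n + 1 : ℕ) : ZMod (n + 1)) + ∑ p ∈ Icc 1 n, g p := by
  have hrange : range (n + 1) = insert 0 (Icc 1 n) := by
    ext x; simp only [mem_range, mem_insert, mem_Icc]; omega
  rw [← sum_range_natCast_add g 0, hrange, sum_insert (by simp), ZMod.natCast_self]
  simp

lemma sum_cycle_le_mpPow_apply_self (A : Matrix (ZMod N) (ZMod N) (WithBot ℝ)) (j : ZMod N) :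
    ∑ z, A (z + 1) z ≤ mpPow A N j j := by
  simpa [sum_range_natCast_add (fun z => A (z + 1) z)] using sum_range_le_mpPow_apply A N j

lemma mpMul_self_apply_self {M : Matrix (ZMod N) (ZMod N) (WithBot ℝ)} {L : WithBot ℝ}
    (hle : ∀ i j, M i j ≤ L) {i : ZMod N} (hi : L ≤ M i i) : mpMul M M i i = 2 • L := by
  rw [two_nsmul]
  refine le_antisymm (Finset.sup_le fun k _ => add_le_add (hle i k) (hle k i)) ?_
  calc L + L ≤ M i i + M i i := add_le_add hi hi
    _ ≤ mpMul M M i i := le_sup (f := fun k => M i k + M k i) (mem_univ i)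

theorem stmt4_general (m : ℕ)
    (A : Matrix (ZMod (2 * m + 1)) (ZMod (2 * m + 1)) (WithBot ℝ))
    (L : WithBot ℝ)
    (hL : L = A 1 ((2 * m + 1 : ℕ) : ZMod (2 * m + 1)) +
        ∑ p ∈ Finset.Icc 1 (2 * m), A ((p : ZMod (2 * m + 1)) + 1) (p : ZMod (2 * m + 1)))
    (hapex : ∀ i j : ZMod (2 * m + 1), mpPow A (2 * m + 1) i j ≤ L)
    (i : ZMod (2 * m + 1)) :
    mpMul (mpPow A (2 * m + 1)) (mpPow A (2 * m + 1)) i i = 2 • L := by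
  have hcycle : L = ∑ z, A (z + 1) z := by
    rw [hL, sum_univ_zmod_succ (2 * m) fun z => A (z + 1) z, ZMod.natCast_self, zero_add]
  exact mpMul_self_apply_self hapex (hcycle ▸ sum_cycle_le_mpPow_apply_self A i)

/-- If `A` satisfies the apex property `[A^{⊗(2m+1)}]_{i,j} ≤ L` for all `i, j`,
then `[A^{⊗(2m+1)} ⊗ A^{⊗(2m+1)}]_{i,i} = 2·L` for every index `i`. -/
theorem stmt4 (m : ℕ) (hm : 2 ≤ m)
    (A : Matrix (ZMod (2 * m + 1)) (ZMod (2 * m + 1)) (WithBot ℝ)) (hA : Honest A)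
    (L : WithBot ℝ)
    (hL : L = A 1 ((2 * m + 1 : ℕ) : ZMod (2 * m + 1)) +
        ∑ p ∈ Finset.Icc 1 (2 * m), A ((p : ZMod (2 * m + 1)) + 1) (p : ZMod (2 * m + 1)))
    (hapex : ∀ i j : ZMod (2 * m + 1), mpPow A (2 * m + 1) i j ≤ L)
    (i : ZMod (2 * m + 1)) :
    mpMul (mpPow A (2 * m + 1)) (mpPow A (2 * m + 1)) i i = 2 • L :=
  stmt4_general m A L hL hapex i
end

section
/- Let m ≥ 2 be an integer, N = 2m+1, and let A be an honest matrix of order N. Then for every k with 1 ≤ k ≤ m and every index j, the diagonal entry [A^{⊗k}]_{j,j} = ε; equivalently, the weighted directed graph whose edge set is { (j, i) : [A]_{i,j} ≠ ε } has no closed walk of length k based at any vertex, for any 1 ≤ k ≤ m. -/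
open Finset

lemma walk_of_ne_bot {N : ℕ} [NeZero N] (A : Matrix (ZMod N) (ZMod N) (WithBot ℝ)) :
    ∀ k (i j : ZMod N), mpPow A k i j ≠ ⊥ →
      ∃ γ : ℕ → ZMod N, γ 0 = j ∧ γ k = i ∧ ∀ t < k, A (γ (t + 1)) (γ t) ≠ ⊥ := by
  intro k
  induction k with
  | zero =>
    intro i j h
    simp only [mpPow, mpId] at h
    split_ifs at h with hij
    · exact ⟨fun _ => j, rfl, hij ▸ rfl, fun t ht => absurd ht (Nat.not_lt_zero t)⟩
    · simp at h
  | succ k ih =>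
    intro i j h
    simp only [mpPow, mpMul] at h
    have : ∃ l : ZMod N, mpPow A k i l + A l j ≠ ⊥ := by
      by_contra hc
      push_neg at hc
      exact h (Finset.sup_eq_bot_iff _ _ |>.2 fun l _ => hc l)
    obtain ⟨l, hl⟩ := this
    rw [Ne, WithBot.add_eq_bot, not_or] at hl
    obtain ⟨γ, hγ0, hγk, hγs⟩ := ih i l hl.1
    refine ⟨fun t => if t = 0 then j else γ (t - 1), if_pos rfl, by simp [hγk], ?_⟩
    intro t ht
    cases t with
    | zero => simpa [hγ0] using hl.2
    | succ t => simpa using hγs t (Nat.lt_of_succ_lt_succ ht)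

/-- For `1 ≤ k ≤ m`, every diagonal entry `[A^{⊗k}]_{j,j} = ε`; equivalently,
the directed graph of `A` (edge `j → i` when `[A]_{i,j} ≠ ε`) has no closed walk of
length `k` based at any vertex. -/
theorem stmt8 (m : ℕ) (hm : 2 ≤ m)
    (A : Matrix (ZMod (2 * m + 1)) (ZMod (2 * m + 1)) (WithBot ℝ)) (hA : Honest A)
    (k : ℕ) (hk1 : 1 ≤ k) (hk2 : k ≤ m) (j : ZMod (2 * m + 1)) :
    mpPow A k j j = ⊥ ∧
    ¬∃ γ : ℕ → ZMod (2 * m + 1),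
        γ 0 = j ∧ γ k = j ∧ ∀ t < k, A (γ (t + 1)) (γ t) ≠ ⊥ := by
  have hnowalk : ¬∃ γ : ℕ → ZMod (2 * m + 1),
      γ 0 = j ∧ γ k = j ∧ ∀ t < k, A (γ (t + 1)) (γ t) ≠ ⊥ := by
    rintro ⟨γ, hγ0, hγk, hγs⟩
    have key : ∀ t ≤ k, ∃ s : ℕ, t ≤ s ∧ s ≤ 2 * t ∧ γ t = j + (s : ZMod (2 * m + 1)) := by
      intro t
      induction t with
      | zero => exact fun _ => ⟨0, le_refl 0, le_refl 0, by simp [hγ0]⟩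
      | succ t ih =>
        intro ht
        obtain ⟨s, hs1, hs2, hs3⟩ := ih (Nat.le_of_succ_le ht)
        have hstep := (hA.1 (γ (t + 1)) (γ t)).1 (hγs t ht)
        rcases hstep with h1 | h2
        · exact ⟨s + 1, by omega, by omega, by push_cast [h1, hs3]; ring⟩
        · exact ⟨s + 2, by omega, by omega, by push_cast [h2, hs3]; ring⟩
    obtain ⟨s, hs1, hs2, hs3⟩ := key k (le_refl k)
    rw [hγk] at hs3
    have : (s : ZMod (2 * m + 1)) = 0 := by
      have := hs3.symm
      rwa [add_eq_left] at this
    have hdvd : (2 * m + 1) ∣ s := (ZMod.natCast_eq_zero_iff s _).1 this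
    have : 2 * m + 1 ≤ s := Nat.le_of_dvd (by omega) hdvd
    omega
  refine ⟨?_, hnowalk⟩
  by_contra h
  exact hnowalk (walk_of_ne_bot A k j j h)
end

section
/- Let m ≥ 2 be an integer, N = 2m+1, and let A be an honest matrix of order N. Then for every k with 1 ≤ k ≤ m-1, setting β₁(k) = 2(m+1) - 2k - 3 and β₂(k) = 2(m+1) - k, the entries [A^{⊗(k+1)}]_{1,β₁(k)} and [A^{⊗(k+1)}]_{1,β₂(k)} both equal ε. -/
open Finset

lemma mpPow_reach {N : ℕ} [NeZero N] {A : Matrix (ZMod N) (ZMod N) (WithBot ℝ)}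
    (hA : ∀ i j : ZMod N, A i j ≠ ⊥ → (i = j + 1 ∨ i = j + 2)) :
    ∀ (p : ℕ) (i j : ZMod N), mpPow A p i j ≠ ⊥ →
      ∃ s : ℕ, p ≤ s ∧ s ≤ 2 * p ∧ i = j + (s : ZMod N) := by
  intro p
  induction p with
  | zero =>
    intro i j h
    refine ⟨0, le_refl _, by norm_num, ?_⟩
    simp only [mpPow, mpId] at h
    by_cases hij : i = j
    · simp [hij]
    · simp [hij] at h
  | succ p ih =>
    intro i j h
    simp only [mpPow, mpMul] at h
    rw [ne_eq, Finset.sup_eq_bot_iff] at h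
    push_neg at h
    obtain ⟨l, _, hl⟩ := h
    rw [ne_eq, WithBot.add_eq_bot] at hl
    push_neg at hl
    obtain ⟨h1, h2⟩ := hl
    obtain ⟨s, hs1, hs2, hs3⟩ := ih i l h1
    rcases hA l j h2 with h | h
    · refine ⟨s + 1, by omega, by omega, ?_⟩
      rw [hs3, h]
      push_cast
      ring
    · refine ⟨s + 2, by omega, by omega, ?_⟩
      rw [hs3, h]
      push_cast
      ring

/-- For `1 ≤ k ≤ m-1`, with `β₁(k) = 2(m+1)-2k-3` and `β₂(k) = 2(m+1)-k`,
both `[A^{⊗(k+1)}]_{1,β₁(k)}` and `[A^{⊗(k+1)}]_{1,β₂(k)}` equal `ε`. -/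
theorem stmt9 (m : ℕ) (hm : 2 ≤ m)
    (A : Matrix (ZMod (2 * m + 1)) (ZMod (2 * m + 1)) (WithBot ℝ)) (hA : Honest A)
    (k : ℕ) (hk1 : 1 ≤ k) (hk2 : k ≤ m - 1) :
    mpPow A (k + 1) 1 ((2 * (m + 1) - 2 * k - 3 : ℕ) : ZMod (2 * m + 1)) = ⊥ ∧
    mpPow A (k + 1) 1 ((2 * (m + 1) - k : ℕ) : ZMod (2 * m + 1)) = ⊥ := by
  have hne : ∀ i j : ZMod (2 * m + 1), A i j ≠ ⊥ → (i = j + 1 ∨ i = j + 2) :=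
    fun i j h => (hA.1 i j).mp h
  have key : ∀ β : ℕ, (∀ s : ℕ, k + 1 ≤ s → s ≤ 2 * (k + 1) →
      ¬ (1 % (2 * m + 1) = (β + s) % (2 * m + 1))) →
      mpPow A (k + 1) 1 ((β : ℕ) : ZMod (2 * m + 1)) = ⊥ := by
    intro β hβ
    by_contra h
    obtain ⟨s, hs1, hs2, hs3⟩ := mpPow_reach hne (k + 1) 1 _ h
    have : ((1 : ℕ) : ZMod (2 * m + 1)) = ((β + s : ℕ) : ZMod (2 * m + 1)) := by
      push_cast
      simpa using hs3
    rw [ZMod.natCast_eq_natCast_iff] at this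
    exact hβ s hs1 hs2 this
  have hN : 1 < 2 * m + 1 := by omega
  constructor
  · apply key
    intro s hs1 hs2 heq
    rw [Nat.mod_eq_of_lt hN] at heq
    set t := 2 * (m + 1) - 2 * k - 3 + s with ht
    have h1 : 2 * m - k ≤ t := by omega
    have h2 : t ≤ 2 * m + 1 := by omega
    rcases lt_or_eq_of_le h2 with h | h
    · rw [Nat.mod_eq_of_lt h] at heq
      omega
    · rw [h, Nat.mod_self] at heq
      omega
  · apply key
    intro s hs1 hs2 heq
    rw [Nat.mod_eq_of_lt hN] at heq
    set t := 2 * (m + 1) - k + s with ht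
    have h1 : 2 * m + 3 ≤ t := by omega
    have h2 : t < 2 * (2 * m + 1) := by omega
    have : t % (2 * m + 1) = t - (2 * m + 1) := by
      rw [Nat.mod_eq_sub_mod (by omega), Nat.mod_eq_of_lt (by omega)]
    rw [this] at heq
    omega
end

section
/- Let m ≥ 2 be an integer, N = 2m+1, and let A be an honest matrix of order N. Then for every k with 1 ≤ k ≤ m-1, the number of indices i with [A^{⊗(k+1)}]_{1,i} ≠ ε equals k + 2. -/
open Finset

lemma mpMul_ne_bot {N : ℕ} [NeZero N] (B A : Matrix (ZMod N) (ZMod N) (WithBot ℝ))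
    (i j : ZMod N) :
    mpMul B A i j ≠ ⊥ ↔ ∃ l, B i l ≠ ⊥ ∧ A l j ≠ ⊥ := by
  unfold mpMul
  rw [Ne, Finset.sup_eq_bot_iff]
  push_neg
  constructor
  · rintro ⟨l, -, h⟩
    rw [Ne, WithBot.add_eq_bot] at h
    push_neg at h
    exact ⟨l, h.1, h.2⟩
  · rintro ⟨l, h1, h2⟩
    refine ⟨l, Finset.mem_univ _, ?_⟩
    rw [Ne, WithBot.add_eq_bot]
    push_neg
    exact ⟨h1, h2⟩

lemma pow_ne_bot {N : ℕ} [NeZero N] (A : Matrix (ZMod N) (ZMod N) (WithBot ℝ))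
    (hA : ∀ i j : ZMod N, A i j ≠ ⊥ ↔ (i = j + 1 ∨ i = j + 2)) :
    ∀ n : ℕ, 1 ≤ n → ∀ i j : ZMod N,
      (mpPow A n i j ≠ ⊥ ↔ ∃ s : ℕ, n ≤ s ∧ s ≤ 2 * n ∧ i = j + (s : ZMod N)) := by
  intro n
  induction n with
  | zero => omega
  | succ n ih =>
    intro _ i j
    rcases Nat.eq_zero_or_pos n with rfl | hn'
    · show mpMul (mpPow A 0) A i j ≠ ⊥ ↔ _
      rw [mpMul_ne_bot]
      constructor
      · rintro ⟨l, h1, h2⟩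
        have hil : i = l := by
          by_contra h
          exact h1 (by simp [mpPow, mpId, h])
        subst hil
        rcases (hA i j).mp h2 with h | h
        · exact ⟨1, le_refl _, by norm_num, by push_cast; exact h⟩
        · exact ⟨2, by norm_num, by norm_num, by push_cast; exact h⟩
      · rintro ⟨s, hs1, hs2, rfl⟩
        refine ⟨j + (s : ZMod N), by simp [mpPow, mpId], ?_⟩
        rw [hA]
        interval_cases s
        · left; push_cast; ring
        · right; push_cast; ring
    · show mpMul (mpPow A n) A i j ≠ ⊥ ↔ _
      rw [mpMul_ne_bot]
      constructor
      · rintro ⟨l, h1, h2⟩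
        obtain ⟨s, hs1, hs2, rfl⟩ := (ih hn' i l).mp h1
        rcases (hA l j).mp h2 with h | h
        · subst h
          exact ⟨s + 1, by omega, by omega, by push_cast; ring⟩
        · subst h
          exact ⟨s + 2, by omega, by omega, by push_cast; ring⟩
      · rintro ⟨s, hs1, hs2, rfl⟩
        by_cases hle : s ≤ 2 * n + 1
        · obtain ⟨t, rfl⟩ : ∃ t, s = t + 1 := ⟨s - 1, by omega⟩
          refine ⟨j + 1, (ih hn' _ _).mpr ⟨t, by omega, by omega, by push_cast; ring⟩, ?_⟩
          rw [hA]; left; rfl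
        · have hs : s = 2 * n + 2 := by omega
          subst hs
          refine ⟨j + 2, (ih hn' _ _).mpr ⟨2 * n, by omega, by omega, by push_cast; ring⟩, ?_⟩
          rw [hA]; right; rfl

/-- For `1 ≤ k ≤ m-1`, the number of indices `i` with
`[A^{⊗(k+1)}]_{1,i} ≠ ε` equals `k + 2`. -/
theorem stmt10 (m : ℕ) (hm : 2 ≤ m)
    (A : Matrix (ZMod (2 * m + 1)) (ZMod (2 * m + 1)) (WithBot ℝ)) (hA : Honest A)
    (k : ℕ) (hk1 : 1 ≤ k) (hk2 : k ≤ m - 1) :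
    (Finset.univ.filter (fun i : ZMod (2 * m + 1) => mpPow A (k + 1) 1 i ≠ ⊥)).card = k + 2 := by
  have hNZ : NeZero (2 * m + 1) := inferInstance
  have key := pow_ne_bot A hA.1 (k + 1) (by omega)
  have hset : (Finset.univ.filter (fun i : ZMod (2 * m + 1) => mpPow A (k + 1) 1 i ≠ ⊥)) =
      (Finset.Icc (k + 1) (2 * (k + 1))).image
        (fun s : ℕ => (1 : ZMod (2 * m + 1)) - (s : ZMod (2 * m + 1))) := by
    ext i
    simp only [Finset.mem_filter, Finset.mem_univ, true_and, Finset.mem_image, Finset.mem_Icc,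
      key 1 i]
    constructor
    · rintro ⟨s, hs1, hs2, h⟩
      exact ⟨s, ⟨hs1, hs2⟩, by rw [h]; ring⟩
    · rintro ⟨s, ⟨hs1, hs2⟩, rfl⟩
      exact ⟨s, hs1, hs2, by ring⟩
  rw [hset, Finset.card_image_of_injOn, Nat.card_Icc]
  · omega
  · intro s hs t ht h
    simp only [Finset.coe_Icc, Set.mem_Icc] at hs ht
    have hcast : (s : ZMod (2 * m + 1)) = (t : ZMod (2 * m + 1)) := by
      have h' : (1 : ZMod (2 * m + 1)) - s = 1 - t := h
      exact sub_right_injective h'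
    have hsv := ZMod.val_natCast_of_lt (show s < 2 * m + 1 by omega)
    have htv := ZMod.val_natCast_of_lt (show t < 2 * m + 1 by omega)
    rw [← hsv, ← htv, hcast]
end

section
/- Let m ≥ 2 be an integer, N = 2m+1, and let A be an honest matrix of order N. Then the supremum of the weights of all closed walks of length 2m+1 based at any fixed vertex i in the directed graph of A equals L = [A]_{1,2m+1} + Σ_{p=1}^{2m} [A]_{p+1,p}; here the weight of a walk γ(0),…,γ(2m+1) is Σ_{t=0}^{2m} [A]_{γ(t+1),γ(t)}. -/
open Finset

lemma sum_univ_zmod' {N : ℕ} [NeZero N] (f : ZMod N → WithBot ℝ) :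
    ∑ j : ZMod N, f j = ∑ t ∈ Finset.range N, f (t : ZMod N) := by
  refine Finset.sum_nbij' (i := fun j : ZMod N => j.val) (j := fun t : ℕ => (t : ZMod N))
    ?_ ?_ ?_ ?_ ?_
  · intro a _; exact Finset.mem_range.2 (ZMod.val_lt a)
  · intro a _; exact Finset.mem_univ _
  · intro a _; simp [ZMod.natCast_val, ZMod.cast_id]
  · intro a ha; exact ZMod.val_natCast_of_lt (Finset.mem_range.1 ha)
  · intro a _; rw [ZMod.natCast_val, ZMod.cast_id]

lemma sum_shift_zmod {N : ℕ} [NeZero N] (f : ZMod N → WithBot ℝ) (i : ZMod N) :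
    ∑ t ∈ Finset.range N, f (i + (t : ZMod N)) = ∑ t ∈ Finset.range N, f (t : ZMod N) := by
  rw [← sum_univ_zmod' f, ← sum_univ_zmod' (fun j => f (i + j))]
  exact Fintype.sum_equiv (Equiv.addLeft i) _ _ (fun x => rfl)

/-- The supremum of the weights of all closed walks of length `2m+1` based at a
fixed vertex `i` equals `L = [A]_{1,2m+1} + Σ_{p=1}^{2m} [A]_{p+1,p}` (and it is attained). -/
theorem stmt12 (m : ℕ) (hm : 2 ≤ m)
    (A : Matrix (ZMod (2 * m + 1)) (ZMod (2 * m + 1)) (WithBot ℝ)) (hA : Honest A)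
    (i : ZMod (2 * m + 1)) (L : WithBot ℝ)
    (hL : L = A 1 ((2 * m + 1 : ℕ) : ZMod (2 * m + 1)) +
        ∑ p ∈ Finset.Icc 1 (2 * m), A ((p : ZMod (2 * m + 1)) + 1) (p : ZMod (2 * m + 1))) :
    IsGreatest
      { w : WithBot ℝ | ∃ γ : ℕ → ZMod (2 * m + 1),
          γ 0 = i ∧ γ (2 * m + 1) = i ∧ (∀ t ≤ 2 * m, A (γ (t + 1)) (γ t) ≠ ⊥) ∧
          w = ∑ t ∈ Finset.range (2 * m + 1), A (γ (t + 1)) (γ t) } L := by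
  -- L as a plain sum over `range (2*m+1)`
  have hLsum : L = ∑ t ∈ Finset.range (2 * m + 1),
      A ((t : ZMod (2 * m + 1)) + 1) (t : ZMod (2 * m + 1)) := by
    rw [hL, Finset.sum_range_succ']
    have h0 : ((2 * m + 1 : ℕ) : ZMod (2 * m + 1)) = 0 := ZMod.natCast_self _
    rw [h0, ← Finset.Ico_add_one_right_eq_Icc, Finset.sum_Ico_eq_sum_range]
    have he : 2 * m + 1 - 1 = 2 * m := by omega
    rw [he]
    have hterm : ∀ x ∈ Finset.range (2 * m),
        A (((1 + x : ℕ) : ZMod (2 * m + 1)) + 1) ((1 + x : ℕ) : ZMod (2 * m + 1))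
          = A (((x + 1 : ℕ) : ZMod (2 * m + 1)) + 1) ((x + 1 : ℕ) : ZMod (2 * m + 1)) := by
      intro x _; rw [Nat.add_comm 1 x]
    rw [Finset.sum_congr rfl hterm]
    push_cast
    ring_nf
    rw [add_comm]
  -- weight of the canonical all-(+1) cycle
  have hwL : ∑ t ∈ Finset.range (2 * m + 1),
      A (i + ((t + 1 : ℕ) : ZMod (2 * m + 1))) (i + (t : ZMod (2 * m + 1))) = L := by
    have h1 : ∀ t ∈ Finset.range (2 * m + 1),
        A (i + ((t + 1 : ℕ) : ZMod (2 * m + 1))) (i + (t : ZMod (2 * m + 1)))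
          = A ((i + (t : ZMod (2 * m + 1))) + 1) (i + (t : ZMod (2 * m + 1))) := by
      intro t _; congr 1; push_cast; ring
    rw [Finset.sum_congr rfl h1]
    have := sum_shift_zmod (N := 2 * m + 1) (fun j => A (j + 1) j) i
    simpa using this.trans hLsum.symm
  constructor
  · -- membership: the all-(+1) cycle attains L
    refine ⟨fun t => i + (t : ZMod (2 * m + 1)), by simp, ?_, ?_, ?_⟩
    · simp [ZMod.natCast_self]
    · intro t ht
      refine (hA.1 _ _).mpr (Or.inl ?_)
      push_cast; ring
    · exact hwL.symm
  · -- upper bound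
    rintro w ⟨γ, h0, hN, hnb, rfl⟩
    have step : ∀ t ≤ 2 * m, γ (t + 1) = γ t + 1 ∨ γ (t + 1) = γ t + 2 :=
      fun t ht => (hA.1 _ _).mp (hnb t ht)
    set d : ℕ → ℕ := fun t => if γ (t + 1) = γ t + 1 then 1 else 2 with hd
    have hd12 : ∀ t, d t = 1 ∨ d t = 2 := by
      intro t; simp only [hd]; split <;> simp
    have hstep : ∀ t ≤ 2 * m, γ (t + 1) = γ t + (d t : ZMod (2 * m + 1)) := by
      intro t ht
      rcases step t ht with h | h
      · simp only [hd]; rw [if_pos h]; simpa using h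
      · by_cases h1 : γ (t + 1) = γ t + 1
        · simp only [hd]; rw [if_pos h1]; simpa using h1
        · simp only [hd]; rw [if_neg h1]; simpa using h
    have hpart : ∀ t ≤ 2 * m + 1,
        γ t = i + ((∑ s ∈ Finset.range t, d s : ℕ) : ZMod (2 * m + 1)) := by
      intro t
      induction t with
      | zero => intro _; simp [h0]
      | succ t ih =>
        intro ht
        have ht' : t ≤ 2 * m := by omega
        rw [hstep t ht', ih (by omega), Finset.sum_range_succ]
        push_cast; ring
    have hdvd : 2 * m + 1 ∣ ∑ s ∈ Finset.range (2 * m + 1), d s := by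
      have h := hpart (2 * m + 1) le_rfl
      rw [hN] at h
      exact (ZMod.natCast_eq_zero_iff _ _).mp (left_eq_add.mp h)
    have hlow : 2 * m + 1 ≤ ∑ s ∈ Finset.range (2 * m + 1), d s := by
      calc 2 * m + 1 = ∑ _s ∈ Finset.range (2 * m + 1), 1 := by simp
        _ ≤ _ := Finset.sum_le_sum (fun t _ => by rcases hd12 t with h | h <;> omega)
    have hhigh : ∑ s ∈ Finset.range (2 * m + 1), d s ≤ 2 * (2 * m + 1) := by
      calc ∑ s ∈ Finset.range (2 * m + 1), d s ≤ ∑ _s ∈ Finset.range (2 * m + 1), 2 :=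
            Finset.sum_le_sum (fun t _ => by rcases hd12 t with h | h <;> omega)
        _ = 2 * (2 * m + 1) := by simp [Nat.mul_comm]
    obtain ⟨k, hk⟩ := hdvd
    have hk1 : 1 ≤ k := by
      rcases Nat.eq_zero_or_pos k with h | h
      · rw [h, Nat.mul_zero] at hk; omega
      · exact h
    have hk2 : k ≤ 2 := by
      refine Nat.le_of_mul_le_mul_left ?_ (show 0 < 2 * m + 1 by omega)
      calc (2 * m + 1) * k = ∑ s ∈ Finset.range (2 * m + 1), d s := hk.symm
        _ ≤ 2 * (2 * m + 1) := hhigh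
        _ = (2 * m + 1) * 2 := by ring
    have hk12 : k = 1 ∨ k = 2 := by omega
    rcases hk12 with hkv | hkv
    · -- all steps are +1 : the walk is the canonical cycle, weight = L
      have hS1 : ∑ s ∈ Finset.range (2 * m + 1), d s = 2 * m + 1 := by
        rw [hk, hkv, Nat.mul_one]
      have hall : ∀ s ∈ Finset.range (2 * m + 1), d s = 1 := by
        have hz : ∑ s ∈ Finset.range (2 * m + 1), (d s - 1) = 0 := by
          have hsplit : ∑ s ∈ Finset.range (2 * m + 1), d s
              = (∑ s ∈ Finset.range (2 * m + 1), (d s - 1))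
                + ∑ _s ∈ Finset.range (2 * m + 1), 1 := by
            rw [← Finset.sum_add_distrib]
            refine Finset.sum_congr rfl fun s _ => ?_
            rcases hd12 s with h | h <;> omega
          simp only [Finset.sum_const, Finset.card_range, smul_eq_mul, mul_one] at hsplit
          omega
        intro s hs
        have := (Finset.sum_eq_zero_iff.mp hz) s hs
        rcases hd12 s with h | h <;> omega
      have hγ : ∀ t ≤ 2 * m + 1, γ t = i + (t : ZMod (2 * m + 1)) := by
        intro t ht
        rw [hpart t ht]
        congr 2
        calc ∑ s ∈ Finset.range t, d s = ∑ _s ∈ Finset.range t, 1 :=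
              Finset.sum_congr rfl fun s hs =>
                hall s (Finset.mem_range.2 (lt_of_lt_of_le (Finset.mem_range.1 hs) ht))
          _ = t := by simp
      have heq : ∑ t ∈ Finset.range (2 * m + 1), A (γ (t + 1)) (γ t)
          = ∑ t ∈ Finset.range (2 * m + 1),
              A (i + ((t + 1 : ℕ) : ZMod (2 * m + 1))) (i + (t : ZMod (2 * m + 1))) := by
        refine Finset.sum_congr rfl fun t ht => ?_
        have htN : t < 2 * m + 1 := Finset.mem_range.1 ht
        rw [hγ (t + 1) (by omega), hγ t (by omega)]
      rw [heq, hwL]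
    · -- all steps are +2 : weight is negative, hence ≤ 0 ≤ L
      have hS2 : ∑ s ∈ Finset.range (2 * m + 1), d s = 2 * (2 * m + 1) := by
        rw [hk, hkv]; ring
      have hall : ∀ s ∈ Finset.range (2 * m + 1), d s = 2 := by
        have hz : ∑ s ∈ Finset.range (2 * m + 1), (2 - d s) = 0 := by
          have hsplit : ∑ _s ∈ Finset.range (2 * m + 1), 2
              = (∑ s ∈ Finset.range (2 * m + 1), (2 - d s))
                + ∑ s ∈ Finset.range (2 * m + 1), d s := by
            rw [← Finset.sum_add_distrib]
            refine Finset.sum_congr rfl fun s _ => ?_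
            rcases hd12 s with h | h <;> omega
          simp only [Finset.sum_const, Finset.card_range, smul_eq_mul] at hsplit
          omega
        intro s hs
        have := (Finset.sum_eq_zero_iff.mp hz) s hs
        rcases hd12 s with h | h <;> omega
      have hstep2 : ∀ t ∈ Finset.range (2 * m + 1), γ (t + 1) = γ t + 2 := by
        intro t ht
        have htN : t < 2 * m + 1 := Finset.mem_range.1 ht
        have h := hstep t (by omega)
        rw [hall t ht] at h
        simpa using h
      have hle0 : ∑ t ∈ Finset.range (2 * m + 1), A (γ (t + 1)) (γ t) ≤ 0 := by
        calc ∑ t ∈ Finset.range (2 * m + 1), A (γ (t + 1)) (γ t)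
            = ∑ t ∈ Finset.range (2 * m + 1), A (γ t + 2) (γ t) :=
              Finset.sum_congr rfl fun t ht => by rw [hstep2 t ht]
          _ ≤ ∑ _t ∈ Finset.range (2 * m + 1), (0 : WithBot ℝ) :=
              Finset.sum_le_sum fun t _ => (hA.2.2 (γ t)).le
          _ = 0 := by simp
      have h0L : (0 : WithBot ℝ) ≤ L := by
        rw [hLsum]
        calc (0 : WithBot ℝ) = ∑ _t ∈ Finset.range (2 * m + 1), (0 : WithBot ℝ) := by simp
          _ ≤ ∑ t ∈ Finset.range (2 * m + 1),
                A ((t : ZMod (2 * m + 1)) + 1) (t : ZMod (2 * m + 1)) :=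
              Finset.sum_le_sum fun t _ => (hA.2.1 _).le
      exact hle0.trans h0L
end

section
/- Let m ≥ 2 be an integer, N = 2m+1, and let A be an honest matrix of order N. Then every entry of the 2m-th max-plus power of A is different from ε: [A^{⊗2m}]_{i,j} ≠ ε for all indices i, j. -/
open Finset

lemma key {N : ℕ} [NeZero N] (A : Matrix (ZMod N) (ZMod N) (WithBot ℝ))
    (hA : ∀ i j : ZMod N, (i = j + 1 ∨ i = j + 2) → A i j ≠ ⊥) :
    ∀ k c : ℕ, k ≤ c → c ≤ 2 * k → ∀ j : ZMod N,
      mpPow A k (j + (c : ZMod N)) j ≠ ⊥ := by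
  intro k
  induction k with
  | zero =>
    intro c hc1 hc2 j
    interval_cases c
    simp [mpPow, mpId]
  | succ k ih =>
    intro c hc1 hc2 j
    have step : ∀ (l : ZMod N) (c' : ℕ), k ≤ c' → c' ≤ 2 * k →
        (l = j + 1 ∨ l = j + 2) → j + (c : ZMod N) = l + (c' : ZMod N) →
        mpPow A (k+1) (j + (c : ZMod N)) j ≠ ⊥ := by
      intro l c' h1 h2 hl heq
      have hterm : mpPow A k (j + (c : ZMod N)) l + A l j ≠ ⊥ := by
        rw [WithBot.add_ne_bot]
        refine ⟨?_, hA l j hl⟩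
        rw [heq]
        exact ih c' h1 h2 l
      have hle : mpPow A k (j + (c : ZMod N)) l + A l j ≤
          mpPow A (k+1) (j + (c : ZMod N)) j :=
        Finset.le_sup (f := fun l => mpPow A k (j + (c : ZMod N)) l + A l j)
          (Finset.mem_univ l)
      intro hbot
      rw [hbot, le_bot_iff] at hle
      exact hterm hle
    by_cases hcase : c ≤ 2 * k + 1
    · refine step (j + 1) (c - 1) (by omega) (by omega) (Or.inl rfl) ?_
      have : ((c - 1 : ℕ) : ZMod N) = (c : ZMod N) - 1 := by
        have : c = (c - 1) + 1 := by omega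
        rw [this]; push_cast; ring
      rw [this]; ring
    · have hc : c = 2 * k + 2 := by omega
      refine step (j + 2) (c - 2) (by omega) (by omega) (Or.inr rfl) ?_
      have : ((c - 2 : ℕ) : ZMod N) = (c : ZMod N) - 2 := by
        have : c = (c - 2) + 2 := by omega
        rw [this]; push_cast; ring
      rw [this]; ring

/-- Every entry of the `2m`-th max-plus power of `A` is different from `ε`. -/
theorem stmt13 (m : ℕ) (hm : 2 ≤ m)
    (A : Matrix (ZMod (2 * m + 1)) (ZMod (2 * m + 1)) (WithBot ℝ)) (hA : Honest A)
    (i j : ZMod (2 * m + 1)) :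
    mpPow A (2 * m) i j ≠ ⊥ := by
  have hA' : ∀ i j : ZMod (2*m+1), (i = j + 1 ∨ i = j + 2) → A i j ≠ ⊥ :=
    fun i j h => (hA.1 i j).mpr h
  have hvlt : (i - j).val < 2 * m + 1 := ZMod.val_lt _
  set v := (i - j).val with hv
  have hvc : ((v : ℕ) : ZMod (2*m+1)) = i - j := by rw [hv, ZMod.natCast_val, ZMod.cast_id]
  by_cases h : v = 2 * m
  · have e : j + ((v : ℕ) : ZMod (2*m+1)) = i := by rw [hvc]; ring
    have := key A hA' (2*m) v (by omega) (by omega) j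
    rwa [e] at this
  · have e : j + ((v + (2*m+1) : ℕ) : ZMod (2*m+1)) = i := by
      rw [Nat.cast_add, ZMod.natCast_self, add_zero, hvc]; ring
    have := key A hA' (2*m) (v + (2*m+1)) (by omega) (by omega) j
    rwa [e] at this
end

section
/- Let m ≥ 2 be an integer, N = 2m+1, and let A be an honest matrix of order N. Then A is 2m-perfect: the minimum of the set { p ∈ ℤ, p > 1 : [A^{⊗p}]_{i,j} ≠ ε for all pairs (i,j) } equals 2m. -/
open Finset

lemma mpMul_ne_bot_iff {N : ℕ} [NeZero N] (A B : Matrix (ZMod N) (ZMod N) (WithBot ℝ))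
    (i j : ZMod N) : mpMul A B i j ≠ ⊥ ↔ ∃ k, A i k ≠ ⊥ ∧ B k j ≠ ⊥ := by
  rw [← not_iff_not, not_ne_iff]
  simp only [mpMul, Finset.sup_eq_bot_iff, Finset.mem_univ, forall_const, WithBot.add_eq_bot]
  push_neg
  constructor
  · intro h k hk
    rcases h k with h' | h'
    · exact absurd h' hk
    · exact h'
  · intro h k
    by_cases hk : A i k = ⊥
    · exact Or.inl hk
    · exact Or.inr (h k hk)

lemma pow_ne_bot_iff {N : ℕ} [NeZero N] (A : Matrix (ZMod N) (ZMod N) (WithBot ℝ))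
    (hA : ∀ i j : ZMod N, A i j ≠ ⊥ ↔ (i = j + 1 ∨ i = j + 2)) :
    ∀ (p : ℕ) (i j : ZMod N),
      mpPow A p i j ≠ ⊥ ↔ ∃ b : ℕ, b ≤ p ∧ i = j + (p : ZMod N) + (b : ZMod N) := by
  intro p
  induction p with
  | zero =>
    intro i j
    constructor
    · intro h
      refine ⟨0, le_refl 0, ?_⟩
      simp only [mpPow, mpId] at h
      by_cases hij : i = j
      · simp [hij]
      · simp [hij] at h
    · rintro ⟨b, hb, h⟩
      interval_cases b
      simp only [Nat.cast_zero, add_zero] at h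
      subst h
      simp [mpPow, mpId]
  | succ p ih =>
    intro i j
    rw [show mpPow A (p+1) = mpMul (mpPow A p) A from rfl, mpMul_ne_bot_iff]
    constructor
    · rintro ⟨k, h1, h2⟩
      rw [ih] at h1
      obtain ⟨b, hb, hib⟩ := h1
      rcases (hA k j).mp h2 with hk | hk
      · exact ⟨b, by omega, by subst hk hib; push_cast; ring⟩
      · exact ⟨b + 1, by omega, by subst hk hib; push_cast; ring⟩
    · rintro ⟨b, hb, hib⟩
      rcases Nat.lt_or_ge b (p + 1) with hlt | hge
      · refine ⟨j + 1, ?_, (hA _ _).mpr (Or.inl rfl)⟩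
        rw [ih]
        exact ⟨b, by omega, by subst hib; push_cast; ring⟩
      · have hbe : b = p + 1 := le_antisymm hb hge
        refine ⟨j + 2, ?_, (hA _ _).mpr (Or.inr rfl)⟩
        rw [ih]
        exact ⟨p, le_refl p, by subst hib hbe; push_cast; ring⟩

/-- `A` is `2m`-perfect: the minimum of the set
`{ p ∈ ℤ, p > 1 : [A^{⊗p}]_{i,j} ≠ ε for all (i,j) }` equals `2m`. -/
theorem stmt15 (m : ℕ) (hm : 2 ≤ m)
    (A : Matrix (ZMod (2 * m + 1)) (ZMod (2 * m + 1)) (WithBot ℝ)) (hA : Honest A) :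
    IsLeast { p : ℕ | 1 < p ∧ ∀ i j : ZMod (2 * m + 1), mpPow A p i j ≠ ⊥ } (2 * m) := by
  obtain ⟨h1, -, -⟩ := hA
  have hN : ((2 * m + 1 : ℕ) : ZMod (2 * m + 1)) = 0 := ZMod.natCast_self _
  have h2m : ((2 * m : ℕ) : ZMod (2 * m + 1)) = -1 := by
    push_cast at hN ⊢; linear_combination hN
  constructor
  · refine ⟨by omega, fun i j => ?_⟩
    rw [pow_ne_bot_iff A h1]
    refine ⟨(i - j + 1).val, ?_, ?_⟩
    · have := ZMod.val_lt (i - j + 1); omega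
    · rw [h2m, ZMod.natCast_val, ZMod.cast_id]; ring
  · rintro p ⟨hp1, hp⟩
    by_contra hlt
    push_neg at hlt
    obtain ⟨b, hb, heq⟩ :=
      (pow_ne_bot_iff A h1 p ((p - 1 : ℕ) : ZMod (2 * m + 1)) 0).mp (hp _ 0)
    have hp1' : ((p - 1 : ℕ) : ZMod (2 * m + 1)) = (p : ZMod (2 * m + 1)) - 1 := by
      have hpe : (p : ℕ) = (p - 1) + 1 := by omega
      rw [hpe]; push_cast; ring
    rw [hp1', zero_add] at heq
    have hbval : (b : ZMod (2 * m + 1)) = ((2 * m : ℕ) : ZMod (2 * m + 1)) := by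
      rw [h2m]; linear_combination -heq
    rw [ZMod.natCast_eq_natCast_iff] at hbval
    have := hbval.eq_of_lt_of_lt (by omega) (by omega)
    omega
end

section
/- Let m ≥ 2 be an integer, N = 2m+1, let A be an honest matrix of order N, and let v be the first row of A (so [v]_j ≠ ε exactly for j ≡ 2m, 2m+1 mod N). Then for every k with 1 ≤ k ≤ m-1, the row vector v ⊗ A^{⊗k} (max-plus vector–matrix product) satisfies: [v ⊗ A^{⊗k}]_j ≠ ε if and only if j is congruent mod N to one of 2m-(k-1), 2m-k, …, 2m-2k; in particular [v ⊗ A^{⊗k}]_1 = ε for 1 ≤ k ≤ m-1. -/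
open Finset

lemma sup_ne_bot_iff {N : ℕ} [NeZero N] (f : ZMod N → WithBot ℝ) :
    (Finset.univ.sup f ≠ ⊥) ↔ ∃ i, f i ≠ ⊥ := by
  rw [ne_eq, Finset.sup_eq_bot_iff]
  push_neg
  simp

lemma pow_support {N : ℕ} [NeZero N] (A : Matrix (ZMod N) (ZMod N) (WithBot ℝ))
    (hA : ∀ i j : ZMod N, A i j ≠ ⊥ ↔ (i = j + 1 ∨ i = j + 2)) :
    ∀ (k : ℕ) (p j : ZMod N), mpPow A k p j ≠ ⊥ ↔
      ∃ s : ℕ, k ≤ s ∧ s ≤ 2 * k ∧ p = j + (s : ZMod N) := by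
  intro k
  induction k with
  | zero =>
    intro p j
    simp only [mpPow, mpId]
    constructor
    · intro h
      refine ⟨0, le_rfl, by omega, ?_⟩
      by_cases hpj : p = j
      · simpa using hpj
      · simp [hpj] at h
    · rintro ⟨s, hs0, hs1, rfl⟩
      have : s = 0 := by omega
      subst this
      simp
  | succ k ih =>
    intro p j
    simp only [mpPow, mpMul]
    rw [sup_ne_bot_iff]
    constructor
    · rintro ⟨q, hq⟩
      rw [ne_eq, WithBot.add_eq_bot, not_or] at hq
      obtain ⟨h1, h2⟩ := hq
      obtain ⟨s, hs1, hs2, hps⟩ := (ih p q).1 h1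
      rcases (hA q j).1 h2 with hq | hq
      · exact ⟨s + 1, by omega, by omega, by rw [hps, hq]; push_cast; ring⟩
      · exact ⟨s + 2, by omega, by omega, by rw [hps, hq]; push_cast; ring⟩
    · rintro ⟨s, hs1, hs2, rfl⟩
      obtain ⟨t, rfl⟩ : ∃ t, s = t + 1 := ⟨s - 1, by omega⟩
      by_cases ht : t ≤ 2 * k
      · refine ⟨j + 1, ?_⟩
        rw [ne_eq, WithBot.add_eq_bot, not_or]
        exact ⟨(ih _ _).2 ⟨t, by omega, ht, by push_cast; ring⟩,
          (hA _ _).2 (Or.inl rfl)⟩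
      · refine ⟨j + 2, ?_⟩
        rw [ne_eq, WithBot.add_eq_bot, not_or]
        have ht' : t = 2 * k + 1 := by omega
        subst ht'
        exact ⟨(ih _ _).2 ⟨2 * k, by omega, le_rfl, by push_cast; ring⟩,
          (hA _ _).2 (Or.inr rfl)⟩

/-- Let `v` be the first row of `A`. For `1 ≤ k ≤ m-1`, the row vector
`v ⊗ A^{⊗k}` (where `[v ⊗ B]_j = max_p ([v]_p + [B]_{p,j})`) has `[v ⊗ A^{⊗k}]_j ≠ ε`
iff `j ≡ 2m-2k+t (mod N)` for some `0 ≤ t ≤ k+1` (i.e. `j` is one of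
`2m-(k-1), 2m-k, …, 2m-2k` mod `N`); in particular `[v ⊗ A^{⊗k}]_1 = ε`. -/
theorem stmt16 (m : ℕ) (hm : 2 ≤ m)
    (A : Matrix (ZMod (2 * m + 1)) (ZMod (2 * m + 1)) (WithBot ℝ)) (hA : Honest A)
    (k : ℕ) (hk1 : 1 ≤ k) (hk2 : k ≤ m - 1) :
    (∀ j : ZMod (2 * m + 1),
        (Finset.univ.sup fun p => A 1 p + mpPow A k p j) ≠ ⊥ ↔
          ∃ t : ℕ, t ≤ k + 1 ∧
            j = ((2 * m - 2 * k : ℕ) : ZMod (2 * m + 1)) + (t : ZMod (2 * m + 1))) ∧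
    (Finset.univ.sup fun p => A 1 p + mpPow A k p 1) = ⊥ := by
  have key : ∀ j : ZMod (2 * m + 1),
      (Finset.univ.sup fun p => A 1 p + mpPow A k p j) ≠ ⊥ ↔
        ∃ t : ℕ, t ≤ k + 1 ∧
          j = ((2 * m - 2 * k : ℕ) : ZMod (2 * m + 1)) + (t : ZMod (2 * m + 1)) := by
    intro j
    rw [sup_ne_bot_iff]
    constructor
    · rintro ⟨p, hp⟩
      rw [ne_eq, WithBot.add_eq_bot, not_or] at hp
      obtain ⟨h1, h2⟩ := hp
      obtain ⟨s, hs1, hs2, rfl⟩ := (pow_support A hA.1 k p j).1 h2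
      rcases (hA.1 1 _).1 h1 with hc | hc
      · -- 1 = j + s + 1, so j + s = 0
        have hj : j + (s : ZMod (2 * m + 1)) = 0 := by linear_combination - hc
        refine ⟨2 * k + 1 - s, by omega, ?_⟩
        have hnat : ((2 * m - 2 * k : ℕ) : ZMod (2 * m + 1)) +
            ((2 * k + 1 - s : ℕ) : ZMod (2 * m + 1)) + ((s : ℕ) : ZMod (2 * m + 1)) =
            ((2 * m + 1 : ℕ) : ZMod (2 * m + 1)) := by
          rw [← Nat.cast_add, ← Nat.cast_add]
          congr 1
          omega
        rw [ZMod.natCast_self] at hnat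
        linear_combination hj - hnat
      · -- 1 = j + s + 2, so j + s + 1 = 0
        have hj : j + (s : ZMod (2 * m + 1)) + 1 = 0 := by linear_combination - hc
        refine ⟨2 * k - s, by omega, ?_⟩
        have hnat : ((2 * m - 2 * k : ℕ) : ZMod (2 * m + 1)) +
            ((2 * k - s : ℕ) : ZMod (2 * m + 1)) + ((s : ℕ) : ZMod (2 * m + 1)) +
            ((1 : ℕ) : ZMod (2 * m + 1)) =
            ((2 * m + 1 : ℕ) : ZMod (2 * m + 1)) := by
          rw [← Nat.cast_add, ← Nat.cast_add, ← Nat.cast_add]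
          congr 1
          omega
        rw [ZMod.natCast_self, Nat.cast_one] at hnat
        linear_combination hj - hnat
    · rintro ⟨t, ht, rfl⟩
      by_cases ht0 : t = 0
      · subst ht0
        refine ⟨((2 * m - 2 * k : ℕ) : ZMod (2 * m + 1)) + ((0 : ℕ) : ZMod (2 * m + 1))
            + ((2 * k : ℕ) : ZMod (2 * m + 1)), ?_⟩
        rw [ne_eq, WithBot.add_eq_bot, not_or]
        refine ⟨?_, (pow_support A hA.1 k _ _).2 ⟨2 * k, by omega, le_rfl, rfl⟩⟩
        refine (hA.1 1 _).2 (Or.inr ?_)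
        have hnat : ((2 * m - 2 * k : ℕ) : ZMod (2 * m + 1)) + ((0 : ℕ) : ZMod (2 * m + 1)) +
            ((2 * k : ℕ) : ZMod (2 * m + 1)) + ((2 : ℕ) : ZMod (2 * m + 1)) =
            ((1 : ℕ) : ZMod (2 * m + 1)) + ((2 * m + 1 : ℕ) : ZMod (2 * m + 1)) := by
          rw [← Nat.cast_add, ← Nat.cast_add, ← Nat.cast_add, ← Nat.cast_add]
          congr 1
          omega
        rw [ZMod.natCast_self, add_zero] at hnat
        push_cast at hnat ⊢
        linear_combination - hnat
      · refine ⟨0, ?_⟩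
        rw [ne_eq, WithBot.add_eq_bot, not_or]
        constructor
        · exact (hA.1 1 0).2 (Or.inl (by rw [zero_add]))
        · refine (pow_support A hA.1 k _ _).2 ⟨2 * k + 1 - t, by omega, by omega, ?_⟩
          have hnat : ((2 * m - 2 * k : ℕ) : ZMod (2 * m + 1)) +
              ((t : ℕ) : ZMod (2 * m + 1)) + ((2 * k + 1 - t : ℕ) : ZMod (2 * m + 1)) =
              ((2 * m + 1 : ℕ) : ZMod (2 * m + 1)) := by
            rw [← Nat.cast_add, ← Nat.cast_add]
            congr 1
            omega
          rw [ZMod.natCast_self] at hnat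
          linear_combination - hnat
    
  refine ⟨key, ?_⟩
  by_contra h
  obtain ⟨t, ht, h1⟩ := (key 1).1 h
  rw [← Nat.cast_add] at h1
  have h1' : ((1 : ℕ) : ZMod (2 * m + 1)) = ((2 * m - 2 * k + t : ℕ) : ZMod (2 * m + 1)) := by
    rw [Nat.cast_one]; exact h1
  have hval := congrArg ZMod.val h1'
  rw [ZMod.val_cast_of_lt (by omega), ZMod.val_cast_of_lt (by omega)] at hval
  omega
end
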